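/- Let G be a connected r-regular graph (r ≥ 1) with edges e_1,…,e_m, and for each i = 1,…,m let H_i be an r_i-regular graph on t_i ≥ 1 vertices. Fix i and let δ be an eigenvalue of the normalized Laplacian 𝓛(H_i) that admits a (real) eigenvector orthogonal to the all-ones vector. Then (1 + r_i δ)/(r_i + 1) is an eigenvalue of the normalized Laplacian of the generalized subdivision-edge corona S(G)⊖∧_{i=1}^m H_i. -/

import Mathlib

open Matrix Polynomial

/-- Adjacency matrix over `ℝ` (with classical decidability). -/
noncomputable def adjM {V : Type*} [Fintype V] [DecidableEq V] (G : SimpleGraph V) :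
    Matrix V V ℝ :=
  letI : DecidableRel G.Adj := Classical.decRel _
  G.adjMatrix ℝ

/-- Degree of a vertex (with classical decidability). -/
noncomputable def cdeg {V : Type*} [Fintype V] (G : SimpleGraph V) (v : V) : ℕ :=
  letI : DecidableRel G.Adj := Classical.decRel _
  G.degree v

/-- The normalized Laplacian `𝓛(G) = I - D^{-1/2} A D^{-1/2}` of a finite graph. -/
noncomputable def normLap {V : Type*} [Fintype V] [DecidableEq V] (G : SimpleGraph V) :
    Matrix V V ℝ :=
  1 - Matrix.diagonal (fun v => (Real.sqrt (cdeg G v))⁻¹) * adjM G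
      * Matrix.diagonal (fun v => (Real.sqrt (cdeg G v))⁻¹)

/-- `x` is an eigenvalue of the real matrix `M`. -/
def IsEigenvalue {V : Type*} [Fintype V] (M : Matrix V V ℝ) (x : ℝ) : Prop :=
  ∃ v : V → ℝ, v ≠ 0 ∧ M.mulVec v = x • v

/-- The generalized subdivision-edge corona `S(G) ⊖ ∧ᵢ Hᵢ`: take the subdivision `S(G)`
(vertices of `G` together with one inserted vertex per edge, each edge `uv` replaced by the
path `u–e–v`), add a disjoint copy of each `Hₑ`, and join the inserted vertex corresponding
to the edge `e` to every vertex of `Hₑ`. -/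
def sec {n : ℕ} (G : SimpleGraph (Fin n)) (t : G.edgeSet → ℕ)
    (H : ∀ e : G.edgeSet, SimpleGraph (Fin (t e))) :
    SimpleGraph (Fin n ⊕ (G.edgeSet ⊕ Σ e : G.edgeSet, Fin (t e))) :=
  SimpleGraph.fromRel (fun a b =>
    match a, b with
    | Sum.inl v, Sum.inr (Sum.inl e) => v ∈ (e : Sym2 (Fin n))
    | Sum.inr (Sum.inl e), Sum.inr (Sum.inr ⟨f, _⟩) => e = f
    | Sum.inr (Sum.inr ⟨e, w⟩), Sum.inr (Sum.inr ⟨f, w'⟩) =>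
        ∃ h : e = f, (H f).Adj (h ▸ w) w'
    | _, _ => False)

/-! Extend the eigenvector `v` of `𝓛(H_{e₀})` by zero to the corona. Every vertex outside the
copy of `H_{e₀}` is adjacent either to all of it (the inserted vertex of `e₀`) or to none of it,
so, as `∑ v = 0`, the adjacency matrix of the corona maps the extension of `v` to the extension
of `A(H_{e₀}) v = r₀ (1 - δ) v`, where `r₀ = rr e₀`. All copy vertices have degree `r₀ + 1`, hence
`𝓛` scales the extension by `1 - r₀ (1 - δ) / (r₀ + 1) = (1 + r₀ δ) / (r₀ + 1)`. -/

open Function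

section NormalizedLaplacian

variable {V : Type*} [Fintype V] {K : SimpleGraph V}

lemma cdeg_eq_degree [DecidableRel K.Adj] (a : V) : cdeg K a = K.degree a := by
  unfold cdeg
  convert rfl

lemma not_adj_of_cdeg_eq_zero {a : V} (h : cdeg K a = 0) (b : V) : ¬ K.Adj a b := by
  classical
  rw [cdeg_eq_degree, ← SimpleGraph.card_neighborFinset_eq_degree, Finset.card_eq_zero] at h
  simpa [h] using K.mem_neighborFinset a b

variable [DecidableEq V]

lemma adjM_apply [DecidableRel K.Adj] (a b : V) : adjM K a b = if K.Adj a b then 1 else 0 := by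
  unfold adjM
  congr

lemma diagonal_mulVec_of_cdeg_eq (k : ℕ) {y : V → ℝ} (hy : ∀ a, cdeg K a ≠ k → y a = 0) :
    diagonal (fun a => (√(cdeg K a : ℝ))⁻¹) *ᵥ y = (√(k : ℝ))⁻¹ • y := by
  funext a
  rw [mulVec_diagonal, Pi.smul_apply, smul_eq_mul]
  by_cases ha : cdeg K a = k
  · rw [ha]
  · rw [hy a ha, mul_zero, mul_zero]

lemma normLap_mulVec_of_cdeg_eq (k : ℕ) {x : V → ℝ} (hx : ∀ a, cdeg K a ≠ k → x a = 0)
    (hAx : ∀ a, cdeg K a ≠ k → (adjM K *ᵥ x) a = 0) :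
    normLap K *ᵥ x = x - (k : ℝ)⁻¹ • (adjM K *ᵥ x) := by
  rw [normLap, sub_mulVec, one_mulVec, ← mulVec_mulVec, ← mulVec_mulVec,
    diagonal_mulVec_of_cdeg_eq k hx, mulVec_smul, mulVec_smul, diagonal_mulVec_of_cdeg_eq k hAx,
    smul_smul, ← mul_inv, Real.mul_self_sqrt (Nat.cast_nonneg k)]

lemma normLap_mulVec_of_regular {d : ℕ} (hK : ∀ a, cdeg K a = d) (x : V → ℝ) :
    normLap K *ᵥ x = x - (d : ℝ)⁻¹ • (adjM K *ᵥ x) :=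
  normLap_mulVec_of_cdeg_eq d (fun a h => absurd (hK a) h) (fun a h => absurd (hK a) h)

lemma adjM_mulVec_of_normLap_mulVec {d : ℕ} (hK : ∀ a, cdeg K a = d) {v : V → ℝ} {δ : ℝ}
    (hv : normLap K *ᵥ v = δ • v) : adjM K *ᵥ v = ((d : ℝ) * (1 - δ)) • v := by
  classical
  rcases eq_or_ne d 0 with rfl | hd
  -- For `d = 0` the eigen-equation carries no information (`(√0)⁻¹ = 0`), but `K` has no edges.
  · have hA : adjM K = 0 := by
      ext a b
      rw [adjM_apply, if_neg (not_adj_of_cdeg_eq_zero (hK a) b)]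
      rfl
    simp [hA]
  · rw [normLap_mulVec_of_regular hK] at hv
    have hd' : (d : ℝ) ≠ 0 := Nat.cast_ne_zero.2 hd
    calc adjM K *ᵥ v = (d : ℝ) • (v - (v - (d : ℝ)⁻¹ • (adjM K *ᵥ v))) := by
          rw [sub_sub_cancel, smul_smul, mul_inv_cancel₀ hd', one_smul]
      _ = ((d : ℝ) * (1 - δ)) • v := by rw [hv, mul_smul, sub_smul, one_smul]

end NormalizedLaplacian

section Extension

variable {V W : Type*} [Fintype V] {K : SimpleGraph V} {H : SimpleGraph W} {ι : W → V}

lemma sum_mul_extend_zero [Fintype W] (hι : Injective ι) (f : V → ℝ) (v : W → ℝ) :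
    ∑ a, f a * extend ι v 0 a = ∑ w, f (ι w) * v w :=
  (Fintype.sum_of_injective ι hι _ _
    (fun a ha => by rw [extend_apply' _ _ _ (by simpa using ha), Pi.zero_apply, mul_zero])
    (fun w => by rw [hι.extend_apply])).symm

lemma extend_zero_apply_of_cdeg_ne {k : ℕ} (hdeg : ∀ w, cdeg K (ι w) = k) (v : W → ℝ) (a : V)
    (ha : cdeg K a ≠ k) : extend ι v 0 a = 0 := by
  rw [extend_apply' _ _ _ (by rintro ⟨w, rfl⟩; exact ha (hdeg w)), Pi.zero_apply]

lemma adjM_mulVec_extend_zero_apply [DecidableEq V] [Fintype W] [DecidableRel K.Adj]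
    (hι : Injective ι) (v : W → ℝ) (a : V) :
    (adjM K *ᵥ extend ι v 0) a = ∑ w, if K.Adj a (ι w) then v w else 0 := by
  rw [mulVec, dotProduct, sum_mul_extend_zero hι]
  simp only [adjM_apply, ite_mul, one_mul, zero_mul]

lemma adjM_mulVec_extend_zero [DecidableEq V] [Fintype W] [DecidableEq W] (hι : Injective ι)
    (hind : ∀ w w', K.Adj (ι w) (ι w') ↔ H.Adj w w')
    (hmod : ∀ a ∉ Set.range ι, ∀ w w', K.Adj a (ι w) → K.Adj a (ι w'))
    {v : W → ℝ} (hv : ∑ w, v w = 0) :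
    adjM K *ᵥ extend ι v 0 = extend ι (adjM H *ᵥ v) 0 := by
  classical
  funext a
  rw [adjM_mulVec_extend_zero_apply hι]
  by_cases ha : a ∈ Set.range ι
  · obtain ⟨w, rfl⟩ := ha
    rw [hι.extend_apply, mulVec, dotProduct]
    simp only [adjM_apply, hind, ite_mul, one_mul, zero_mul]
  · rw [extend_apply' _ _ _ ha, Pi.zero_apply]
    by_cases hadj : ∃ w, K.Adj a (ι w)
    · obtain ⟨w₀, hw₀⟩ := hadj
      rw [← hv]
      exact Finset.sum_congr rfl fun w _ => if_pos (hmod a ha w₀ w hw₀)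
    · push Not at hadj
      exact Finset.sum_eq_zero fun w _ => if_neg (hadj w)

theorem normLap_mulVec_extend_zero [DecidableEq V] [Fintype W] [DecidableEq W] {d : ℕ}
    (hH : ∀ w, cdeg H w = d) (hι : Injective ι) (hind : ∀ w w', K.Adj (ι w) (ι w') ↔ H.Adj w w')
    (hmod : ∀ a ∉ Set.range ι, ∀ w w', K.Adj a (ι w) → K.Adj a (ι w'))
    (hdeg : ∀ w, cdeg K (ι w) = d + 1) {v : W → ℝ} {δ : ℝ} (hvδ : normLap H *ᵥ v = δ • v)
    (hv : ∑ w, v w = 0) :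
    normLap K *ᵥ extend ι v 0 = ((1 + (d : ℝ) * δ) / ((d : ℝ) + 1)) • extend ι v 0 := by
  have hAx := adjM_mulVec_extend_zero hι hind hmod hv
  rw [normLap_mulVec_of_cdeg_eq (d + 1) (extend_zero_apply_of_cdeg_ne hdeg v)
    (by rw [hAx]; exact extend_zero_apply_of_cdeg_ne hdeg _), hAx,
    adjM_mulVec_of_normLap_mulVec hH hvδ]
  funext a
  by_cases ha : a ∈ Set.range ι
  · obtain ⟨w, rfl⟩ := ha
    simp only [Pi.sub_apply, Pi.smul_apply, hι.extend_apply, smul_eq_mul]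
    field_simp
    push_cast
    ring
  · simp [extend_apply' _ _ _ ha]

end Extension

section SubdivisionEdgeCorona

variable {n : ℕ} {G : SimpleGraph (Fin n)} (t : G.edgeSet → ℕ)
  {H : ∀ e : G.edgeSet, SimpleGraph (Fin (t e))}

def secCopy (e : G.edgeSet) (w : Fin (t e)) :
    Fin n ⊕ (G.edgeSet ⊕ Σ e : G.edgeSet, Fin (t e)) :=
  Sum.inr (Sum.inr ⟨e, w⟩)

variable {t}

lemma secCopy_injective (e : G.edgeSet) : Injective (secCopy t e) := by
  intro w w' h
  simpa [secCopy] using h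

lemma sec_adj_secCopy_iff (e : G.edgeSet) (a : Fin n ⊕ (G.edgeSet ⊕ Σ e : G.edgeSet, Fin (t e)))
    (w : Fin (t e)) :
    (sec G t H).Adj a (secCopy t e w) ↔
      a = Sum.inr (Sum.inl e) ∨ ∃ w', a = secCopy t e w' ∧ (H e).Adj w' w := by
  rcases a with u | f | ⟨f, w'⟩
  · simp [sec, secCopy]
  · simp [sec, secCopy]
  · by_cases hf : f = e
    · subst hf
      simp only [sec, secCopy, SimpleGraph.fromRel_adj]
      simp only [ne_eq, reduceCtorEq, Sum.inr.injEq, Sigma.mk.injEq, heq_eq_eq, true_and,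
        exists_const, exists_eq_left', false_or]
      rw [(H f).adj_comm w w', or_self]
      exact ⟨And.right, fun h => ⟨h.ne, h⟩⟩
    · simp [sec, secCopy, hf, Ne.symm hf]

lemma sec_adj_secCopy_secCopy (e : G.edgeSet) (w w' : Fin (t e)) :
    (sec G t H).Adj (secCopy t e w) (secCopy t e w') ↔ (H e).Adj w w' := by
  rw [sec_adj_secCopy_iff]
  simp [secCopy]

lemma sec_adj_secCopy_of_notMem_range (e : G.edgeSet)
    (a : Fin n ⊕ (G.edgeSet ⊕ Σ e : G.edgeSet, Fin (t e))) (ha : a ∉ Set.range (secCopy t e))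
    (w w' : Fin (t e)) :
    (sec G t H).Adj a (secCopy t e w) → (sec G t H).Adj a (secCopy t e w') := by
  rw [sec_adj_secCopy_iff, sec_adj_secCopy_iff]
  rintro (rfl | ⟨w'', rfl, -⟩)
  · exact Or.inl rfl
  · exact absurd ⟨w'', rfl⟩ ha

lemma cdeg_sec_secCopy [DecidableRel G.Adj] (e : G.edgeSet) {d : ℕ} (hH : ∀ w, cdeg (H e) w = d)
    (w : Fin (t e)) : cdeg (sec G t H) (secCopy t e w) = d + 1 := by
  classical
  have hnbr : (sec G t H).neighborFinset (secCopy t e w) =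
      insert (Sum.inr (Sum.inl e)) (((H e).neighborFinset w).map ⟨_, secCopy_injective e⟩) := by
    ext a
    simp [SimpleGraph.mem_neighborFinset, (sec G t H).adj_comm _ a, sec_adj_secCopy_iff,
      (H e).adj_comm w, eq_comm, and_comm]
  rw [cdeg_eq_degree, ← SimpleGraph.card_neighborFinset_eq_degree, hnbr,
    Finset.card_insert_of_notMem (by simp [secCopy]), Finset.card_map,
    SimpleGraph.card_neighborFinset_eq_degree, ← cdeg_eq_degree, hH]

end SubdivisionEdgeCorona

theorem stmt6_general {n : ℕ}
    (G : SimpleGraph (Fin n)) [DecidableRel G.Adj]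
    (t : G.edgeSet → ℕ)
    (rr : G.edgeSet → ℕ) (H : ∀ e : G.edgeSet, SimpleGraph (Fin (t e)))
    (hH : ∀ e w, cdeg (H e) w = rr e)
    (e₀ : G.edgeSet) (δ : ℝ)
    (hδ : ∃ v : Fin (t e₀) → ℝ, v ≠ 0 ∧ (normLap (H e₀)).mulVec v = δ • v ∧
      ∑ w, v w = 0) :
    IsEigenvalue (normLap (sec G t H)) ((1 + (rr e₀ : ℝ) * δ) / ((rr e₀ : ℝ) + 1)) := by
  obtain ⟨v, hv0, hvδ, hv⟩ := hδ
  refine ⟨extend (secCopy t e₀) v 0, ?_, ?_⟩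
  · refine fun hx => hv0 (funext fun w => ?_)
    simpa [(secCopy_injective e₀).extend_apply] using congrFun hx (secCopy t e₀ w)
  · exact normLap_mulVec_extend_zero (hH e₀) (secCopy_injective e₀) (sec_adj_secCopy_secCopy e₀)
      (sec_adj_secCopy_of_notMem_range e₀) (cdeg_sec_secCopy e₀ (hH e₀)) hvδ hv

theorem stmt6 {n r : ℕ} (hr : 1 ≤ r)
    (G : SimpleGraph (Fin n)) [DecidableRel G.Adj]
    (hconn : G.Connected) (hG : ∀ v, cdeg G v = r)
    (t : G.edgeSet → ℕ) (ht : ∀ e, 1 ≤ t e)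
    (rr : G.edgeSet → ℕ) (H : ∀ e : G.edgeSet, SimpleGraph (Fin (t e)))
    (hH : ∀ e w, cdeg (H e) w = rr e)
    (e₀ : G.edgeSet) (δ : ℝ)
    (hδ : ∃ v : Fin (t e₀) → ℝ, v ≠ 0 ∧ (normLap (H e₀)).mulVec v = δ • v ∧
      ∑ w, v w = 0) :
    IsEigenvalue (normLap (sec G t H)) ((1 + (rr e₀ : ℝ) * δ) / ((rr e₀ : ℝ) + 1)) :=
  stmt6_general G t rr H hH e₀ δ hδ
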